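/- Let p(x) = x^T A x − tr(A) where A is a symmetric d×d matrix with Frobenius norm 1. Then, writing t = ⌊log₂ d⌋, one can write A/ (as p) in the form p = 2(p₁ + p₂ + p₄ + ... + p_{2^t} + p_d), where each p_k(x) = x^T A_k x − tr(A_k) and A_k is a symmetric matrix of rank at most k with spectral norm at most 1/√k. -/

import Mathlib

open Multiset

/-- Euclidean norm of a vector in ℝ^d. -/
noncomputable def eucNorm {d : ℕ} (x : Fin d → ℝ) : ℝ := Real.sqrt (∑ i, x i ^ 2)

/-- Euclidean inner product on ℝ^d. -/
def edot {d : ℕ} (v x : Fin d → ℝ) : ℝ := ∑ i, v i * x i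

/-- Mean of a finite multiset of points in ℝ^d. -/
noncomputable def mmean {d : ℕ} (S : Multiset (Fin d → ℝ)) : Fin d → ℝ :=
  (S.card : ℝ)⁻¹ • S.sum

/-- Second-moment matrix (1/|S|) Σ_{x∈S} (x−μ)(x−μ)^T of a multiset about a point μ. -/
noncomputable def secondMoment {d : ℕ} (S : Multiset (Fin d → ℝ)) (μ : Fin d → ℝ) :
    Matrix (Fin d) (Fin d) ℝ :=
  (S.card : ℝ)⁻¹ • (S.map (fun x => Matrix.vecMulVec (x - μ) (x - μ))).sum

/-- Spectral norm of a symmetric PSD matrix: the supremum of v^T M v over unit vectors. -/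
noncomputable def specNorm {d : ℕ} (M : Matrix (Fin d) (Fin d) ℝ) : ℝ :=
  ⨆ v : {v : Fin d → ℝ // eucNorm v = 1}, dotProduct v.1 (M.mulVec v.1)

/-!
Everything happens on the eigenvalues `λ` of `A = U diag(λ) Uᵀ`, for which `∑ λᵢ² = ‖A‖_F² = 1`,
so at most `k` of them satisfy `k λᵢ² ≥ 1`. Those that reach this size at scale `k = 2ʲ` but not
yet at scale `k / 2` are at most `k` in number and satisfy `λᵢ² < 2 / k`; half of them, conjugated
back by `U`, is a piece of rank `≤ k` and norm `≤ 1 / √k`. The eigenvalues still small at scale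
`2ᵗ` satisfy `λᵢ² < 2 / d` and form the piece of index `d`; when `d = 2ᵗ` that index occurs twice
in the sum, and its two pieces are averaged.
-/

open scoped Finset

-- If `d ∈ K` the index `d` is counted twice, and `e` is absorbed by averaging it with `f d`.
theorem exists_sum_add_apply_eq_sum_add {M : Type*} [AddCommGroup M] [Module ℝ M]
    (P : ℕ → M → Prop) (K : Finset ℕ) (d : ℕ)
    (hP : ∀ x y, P d x → P d y → P d (midpoint ℝ x y))
    (f : ℕ → M) (hf : ∀ k, P k (f k)) (e : M) (he : P d e) :
    ∃ g : ℕ → M, (∀ k, P k (g k)) ∧ ∑ k ∈ K, g k + g d = ∑ k ∈ K, f k + e := by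
  classical
  by_cases hd : d ∈ K
  · refine ⟨Function.update f d (midpoint ℝ (f d) e), fun k => ?_, ?_⟩
    · rcases eq_or_ne k d with rfl | hk
      · simpa using hP _ _ (hf k) he
      · simpa [hk] using hf k
    · rw [Finset.sum_update_of_mem hd, Function.update_self, add_right_comm, midpoint_add_self,
        Finset.sdiff_singleton_eq_erase, ← Finset.add_sum_erase K f hd]
      abel
  · refine ⟨Function.update f d e, fun k => ?_, ?_⟩
    · rcases eq_or_ne k d with rfl | hk
      · simpa using he
      · simpa [hk] using hf k
    · rw [Finset.sum_update_of_notMem hd, Function.update_self]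

section Scalar

variable {ι : Type*} [Fintype ι]

noncomputable def heavySet (a : ι → ℝ) (k : ℕ) : Finset ι := {i | 1 ≤ k * a i ^ 2}

def IsSparseBounded (k : ℕ) (x : ι → ℝ) : Prop :=
  #{i | x i ≠ 0} ≤ k ∧ ∀ i, |x i| ≤ 1 / √k

theorem abs_le_one_div_sqrt_of_mul_sq_le {k x : ℝ} (hk : 0 < k) (h : k * x ^ 2 ≤ 1) :
    |x| ≤ 1 / √k := by
  rw [one_div, ← Real.sqrt_inv]
  exact Real.abs_le_sqrt (by rw [← one_div, le_div_iff₀ hk]; linarith)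

theorem heavySet_zero (a : ι → ℝ) : heavySet a 0 = ∅ := by
  simp [heavySet]

theorem heavySet_mono (a : ι → ℝ) : Monotone (heavySet a) := fun m k hmk i hi => by
  simp only [heavySet, Finset.mem_filter, Finset.mem_univ, true_and] at hi ⊢
  exact hi.trans (by gcongr)

variable {a : ι → ℝ}

theorem card_heavySet_le (ha : ∑ i, a i ^ 2 ≤ 1) (k : ℕ) : #(heavySet a k) ≤ k := by
  have h : #(heavySet a k) • (1 : ℝ) ≤ ∑ i ∈ heavySet a k, k * a i ^ 2 :=
    Finset.card_nsmul_le_sum _ _ _ fun i hi => (Finset.mem_filter.mp hi).2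
  have hsub : ∑ i ∈ heavySet a k, a i ^ 2 ≤ ∑ i, a i ^ 2 :=
    Finset.sum_le_sum_of_subset_of_nonneg (Finset.subset_univ _) fun i _ _ => sq_nonneg _
  rw [nsmul_one, ← Finset.mul_sum] at h
  exact_mod_cast h.trans (mul_le_of_le_one_right k.cast_nonneg (hsub.trans ha))

theorem abs_half_le_of_notMem_heavySet (ha : ∑ i, a i ^ 2 ≤ 1) {m k : ℕ} (hk₀ : 0 < k)
    (hk : k ≤ 2 * m + 1) {i : ι} (hi : i ∉ heavySet a m) : |a i / 2| ≤ 1 / √k := by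
  have hai : a i ^ 2 ≤ 1 :=
    (Finset.single_le_sum (fun j _ => sq_nonneg (a j)) (Finset.mem_univ i)).trans ha
  have hm : m * a i ^ 2 < 1 := by simpa [heavySet] using hi
  have hk' : (k : ℝ) ≤ 2 * m + 1 := by exact_mod_cast hk
  exact abs_le_one_div_sqrt_of_mul_sq_le (by exact_mod_cast hk₀) (by nlinarith [sq_nonneg (a i)])

noncomputable def dyadicPiece (a : ι → ℝ) (k : ℕ) : ι → ℝ :=
  (2 : ℝ)⁻¹ • Set.indicator (↑(heavySet a k) \ ↑(heavySet a (k / 2))) a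

noncomputable def remainderPiece (a : ι → ℝ) (m : ℕ) : ι → ℝ :=
  (2 : ℝ)⁻¹ • Set.indicator (↑(heavySet a m))ᶜ a

theorem isSparseBounded_dyadicPiece (ha : ∑ i, a i ^ 2 ≤ 1) (k : ℕ) :
    IsSparseBounded k (dyadicPiece a k) := by
  constructor
  · refine (Finset.card_le_card fun i hi => ?_).trans (card_heavySet_le ha k)
    by_contra h
    simp only [Finset.mem_filter, Finset.mem_univ, true_and] at hi
    exact hi (by rw [dyadicPiece, Pi.smul_apply, Set.indicator_of_notMem (fun hs => h hs.1),
      smul_zero])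
  · intro i
    by_cases h : i ∈ (↑(heavySet a k) \ ↑(heavySet a (k / 2)) : Set ι)
    · have hk : 0 < k := by
        have : 1 ≤ (k : ℝ) * a i ^ 2 := (Finset.mem_filter.mp h.1).2
        exact_mod_cast pos_of_mul_pos_left (one_pos.trans_le this) (sq_nonneg (a i))
      rw [dyadicPiece, Pi.smul_apply, Set.indicator_of_mem h, smul_eq_mul, inv_mul_eq_div]
      exact abs_half_le_of_notMem_heavySet ha hk (by omega) h.2
    · rw [dyadicPiece, Pi.smul_apply, Set.indicator_of_notMem h, smul_zero, abs_zero]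
      positivity

theorem isSparseBounded_remainderPiece (ha : ∑ i, a i ^ 2 ≤ 1) {m : ℕ}
    (hm : Fintype.card ι ≤ 2 * m + 1) :
    IsSparseBounded (Fintype.card ι) (remainderPiece a m) := by
  refine ⟨(Finset.card_filter_le _ _).trans_eq Finset.card_univ, fun i => ?_⟩
  by_cases h : i ∈ (↑(heavySet a m) : Set ι)ᶜ
  · rw [remainderPiece, Pi.smul_apply, Set.indicator_of_mem h, smul_eq_mul, inv_mul_eq_div]
    exact abs_half_le_of_notMem_heavySet ha (Fintype.card_pos_iff.mpr ⟨i⟩) hm h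
  · rw [remainderPiece, Pi.smul_apply, Set.indicator_of_notMem h, smul_zero, abs_zero]
    positivity

theorem two_smul_sum_dyadicPiece_add_remainderPiece (a : ι → ℝ) (t : ℕ) :
    (2 : ℝ) • (∑ j ∈ Finset.range (t + 1), dyadicPiece a (2 ^ j) + remainderPiece a (2 ^ t)) =
      a := by
  have htel : ∑ j ∈ Finset.range (t + 1),
      Set.indicator (↑(heavySet a (2 ^ j)) \ ↑(heavySet a (2 ^ j / 2))) a =
        Set.indicator ↑(heavySet a (2 ^ t)) a := by
    have hhalf : ∀ j, 2 ^ (j + 1) / 2 = 2 ^ j := fun j => by omega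
    simp_rw [Set.indicator_sdiff (Finset.coe_subset.mpr (heavySet_mono a (Nat.div_le_self _ _)))]
    have h := Finset.sum_range_sub (fun j => Set.indicator ↑(heavySet a (2 ^ j / 2)) a) (t + 1)
    simp only [hhalf] at h
    rwa [show 2 ^ 0 / 2 = 0 from rfl, heavySet_zero, Finset.coe_empty, Set.indicator_empty',
      sub_zero] at h
  simp only [dyadicPiece, remainderPiece]
  rw [← Finset.smul_sum, ← smul_add, smul_smul, htel, Set.indicator_self_add_compl]
  norm_num

theorem IsSparseBounded.midpoint {x y : ι → ℝ} (hx : IsSparseBounded (Fintype.card ι) x)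
    (hy : IsSparseBounded (Fintype.card ι) y) :
    IsSparseBounded (Fintype.card ι) (midpoint ℝ x y) := by
  refine ⟨(Finset.card_filter_le _ _).trans_eq Finset.card_univ, fun i => ?_⟩
  have hxy := abs_add_le (x i) (y i)
  rw [midpoint_eq_smul_add, Pi.smul_apply, Pi.add_apply, smul_eq_mul, invOf_eq_inv, abs_mul,
    abs_of_pos (by norm_num : (0 : ℝ) < 2⁻¹)]
  linarith [hx.2 i, hy.2 i]

theorem exists_isSparseBounded_decomposition (ha : ∑ i, a i ^ 2 ≤ 1) :
    ∃ f : ℕ → ι → ℝ, (∀ k, IsSparseBounded k (f k)) ∧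
      a = (2 : ℝ) • (∑ j ∈ Finset.range (Nat.log2 (Fintype.card ι) + 1), f (2 ^ j) +
        f (Fintype.card ι)) := by
  have hcard : Fintype.card ι ≤ 2 * 2 ^ Nat.log2 (Fintype.card ι) + 1 := by
    have := Nat.lt_log2_self (n := Fintype.card ι)
    rw [pow_succ] at this
    omega
  set t := Nat.log2 (Fintype.card ι)
  obtain ⟨f, hf, hsum⟩ := exists_sum_add_apply_eq_sum_add IsSparseBounded
    ((Finset.range (t + 1)).map ⟨(2 ^ ·), Nat.pow_right_injective le_rfl⟩) (Fintype.card ι)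
    (fun _ _ => IsSparseBounded.midpoint) (dyadicPiece a) (isSparseBounded_dyadicPiece ha)
    (remainderPiece a (2 ^ t)) (isSparseBounded_remainderPiece ha hcard)
  refine ⟨f, hf, ?_⟩
  simp only [Finset.sum_map, Function.Embedding.coeFn_mk] at hsum
  rw [hsum, two_smul_sum_dyadicPiece_add_remainderPiece]

end Scalar

section Spectral

open Matrix

variable {n : Type*} [Fintype n] [DecidableEq n]

noncomputable def Matrix.conjDiagonal (U : unitaryGroup n ℝ) : (n → ℝ) →ₗ[ℝ] Matrix n n ℝ where
  toFun f := U * diagonal f * star (U : Matrix n n ℝ)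
  map_add' f g := by
    have h : diagonal (f + g) = diagonal f + diagonal g := (diagonal_add f g).symm
    rw [h, Matrix.mul_add, Matrix.add_mul]
  map_smul' c f := by rw [RingHom.id_apply, diagonal_smul, Matrix.mul_smul, Matrix.smul_mul]

theorem Matrix.conjDiagonal_apply (U : unitaryGroup n ℝ) (f : n → ℝ) :
    conjDiagonal U f = U * diagonal f * star (U : Matrix n n ℝ) :=
  rfl

theorem Matrix.conjDiagonal_mul_conjDiagonal (U : unitaryGroup n ℝ) (f g : n → ℝ) :
    conjDiagonal U f * conjDiagonal U g = conjDiagonal U (f * g) := by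
  have h := (map_mul (Unitary.conjStarAlgAut ℝ _ U) (diagonal f) (diagonal g)).symm
  rwa [diagonal_mul_diagonal] at h

theorem Matrix.trace_conjDiagonal (U : unitaryGroup n ℝ) (f : n → ℝ) :
    (conjDiagonal U f).trace = ∑ i, f i := by
  rw [conjDiagonal_apply, trace_mul_cycle, mem_unitaryGroup_iff'.mp U.2, one_mul,
    trace_diagonal]

theorem Matrix.IsHermitian.conjDiagonal_eigenvalues {A : Matrix n n ℝ} (hA : A.IsHermitian) :
    conjDiagonal hA.eigenvectorUnitary hA.eigenvalues = A := by
  conv_rhs => rw [hA.spectral_theorem, RCLike.ofReal_real_eq_id, Function.id_comp]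
  rfl

theorem Matrix.isSymm_conjDiagonal (U : unitaryGroup n ℝ) (f : n → ℝ) :
    (conjDiagonal U f).IsSymm := by
  have h := isHermitian_mul_mul_conjTranspose (U : Matrix n n ℝ) (isHermitian_diagonal f)
  rwa [IsHermitian, conjTranspose_eq_transpose_of_trivial, ← star_eq_conjTranspose] at h

theorem Matrix.rank_conjDiagonal_le (U : unitaryGroup n ℝ) (f : n → ℝ) :
    (conjDiagonal U f).rank ≤ #{i | f i ≠ 0} := by
  rw [conjDiagonal_apply, ← Fintype.card_subtype, ← rank_diagonal]
  exact (rank_mul_le_left _ _).trans (rank_mul_le_right _ _)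

theorem Matrix.dotProduct_conjDiagonal_mulVec (U : unitaryGroup n ℝ) (f v : n → ℝ) :
    v ⬝ᵥ conjDiagonal U f *ᵥ v = ∑ i, f i * (star (U : Matrix n n ℝ) *ᵥ v) i ^ 2 := by
  rw [conjDiagonal_apply, ← mulVec_mulVec, ← mulVec_mulVec, dotProduct_mulVec,
    star_eq_conjTranspose, conjTranspose_eq_transpose_of_trivial, ← mulVec_transpose]
  simp only [dotProduct, mulVec_diagonal]
  exact Finset.sum_congr rfl fun i _ => by ring

theorem Matrix.sum_sq_star_mulVec (U : unitaryGroup n ℝ) (v : n → ℝ) :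
    ∑ i, (star (U : Matrix n n ℝ) *ᵥ v) i ^ 2 = v ⬝ᵥ v := by
  have h : star (U : Matrix n n ℝ) *ᵥ v ⬝ᵥ star (U : Matrix n n ℝ) *ᵥ v = v ⬝ᵥ v := by
    rw [dotProduct_mulVec, ← mulVec_transpose, star_eq_conjTranspose,
      conjTranspose_eq_transpose_of_trivial, transpose_transpose, mulVec_mulVec,
      ← conjTranspose_eq_transpose_of_trivial, ← star_eq_conjTranspose,
      mem_unitaryGroup_iff.mp U.2, one_mulVec]
  simpa only [dotProduct, sq] using h

theorem Matrix.abs_dotProduct_conjDiagonal_mulVec_le (U : unitaryGroup n ℝ) {f : n → ℝ} {c : ℝ}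
    (hf : ∀ i, |f i| ≤ c) (v : n → ℝ) :
    |v ⬝ᵥ conjDiagonal U f *ᵥ v| ≤ c * (v ⬝ᵥ v) := by
  rw [dotProduct_conjDiagonal_mulVec, ← sum_sq_star_mulVec U, Finset.mul_sum]
  refine (Finset.abs_sum_le_sum_abs _ _).trans (Finset.sum_le_sum fun i _ => ?_)
  rw [abs_mul, abs_sq]
  exact mul_le_mul_of_nonneg_right (hf i) (sq_nonneg _)

theorem Matrix.IsHermitian.sum_sq_eigenvalues {A : Matrix n n ℝ} (hA : A.IsHermitian) :
    ∑ i, hA.eigenvalues i ^ 2 = ∑ i, ∑ j, A i j ^ 2 := by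
  have htrace : (A * A).trace = ∑ i, hA.eigenvalues i ^ 2 := by
    conv_lhs =>
      rw [← hA.conjDiagonal_eigenvalues, conjDiagonal_mul_conjDiagonal, trace_conjDiagonal]
    simp only [Pi.mul_apply, sq]
  simp only [← htrace, trace, diag, mul_apply]
  refine Finset.sum_congr rfl fun i _ => Finset.sum_congr rfl fun j _ => ?_
  rw [sq, ← star_trivial (A j i), hA.apply]

end Spectral

theorem eucNorm_sq {d : ℕ} (x : Fin d → ℝ) : eucNorm x ^ 2 = x ⬝ᵥ x := by
  rw [eucNorm, Real.sq_sqrt (Finset.sum_nonneg fun i _ => sq_nonneg (x i))]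
  simp only [dotProduct, sq]

theorem dyadic_rank_decomposition_general {d : ℕ}
    (A : Matrix (Fin d) (Fin d) ℝ) (hsymm : A.IsSymm)
    (hfrob : ∑ i, ∑ j, A i j ^ 2 = 1) :
    ∃ B : ℕ → Matrix (Fin d) (Fin d) ℝ,
      (∀ k, (B k).IsSymm) ∧
      (∀ k, (B k).rank ≤ k) ∧
      (∀ k, ∀ v : Fin d → ℝ, eucNorm v = 1 →
        |dotProduct v ((B k).mulVec v)| ≤ 1 / Real.sqrt k) ∧
      A = (2 : ℝ) • ((∑ j ∈ Finset.range (Nat.log2 d + 1), B (2 ^ j)) + B d) := by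
  have hA : A.IsHermitian := Matrix.isHermitian_iff_isSelfAdjoint.mpr hsymm
  obtain ⟨f, hf, heig⟩ := exists_isSparseBounded_decomposition (a := hA.eigenvalues)
    (by rw [hA.sum_sq_eigenvalues, hfrob])
  rw [Fintype.card_fin] at heig
  set U := hA.eigenvectorUnitary
  refine ⟨fun k => Matrix.conjDiagonal U (f k), fun k => Matrix.isSymm_conjDiagonal U (f k),
    fun k => (Matrix.rank_conjDiagonal_le U (f k)).trans (hf k).1, fun k v hv => ?_, ?_⟩
  · have hvv : v ⬝ᵥ v = 1 := by rw [← eucNorm_sq, hv, one_pow]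
    simpa [hvv] using Matrix.abs_dotProduct_conjDiagonal_mulVec_le U (hf k).2 v
  · rw [← hA.conjDiagonal_eigenvalues, heig, map_smul, _root_.map_add, map_sum]

/-- Any symmetric A with Frobenius norm 1 (equivalently, the polynomial
p(x) = x^TAx − tr A) decomposes as A = 2(B₁ + B₂ + B₄ + ... + B_{2^t} + B_d) with
t = ⌊log₂ d⌋, where each B_k is symmetric of rank ≤ k and spectral norm ≤ 1/√k. -/
theorem dyadic_rank_decomposition {d : ℕ} (hd : 1 ≤ d)
    (A : Matrix (Fin d) (Fin d) ℝ) (hsymm : A.IsSymm)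
    (hfrob : ∑ i, ∑ j, A i j ^ 2 = 1) :
    ∃ B : ℕ → Matrix (Fin d) (Fin d) ℝ,
      (∀ k, (B k).IsSymm) ∧
      (∀ k, (B k).rank ≤ k) ∧
      (∀ k, ∀ v : Fin d → ℝ, eucNorm v = 1 →
        |dotProduct v ((B k).mulVec v)| ≤ 1 / Real.sqrt k) ∧
      A = (2 : ℝ) • ((∑ j ∈ Finset.range (Nat.log2 d + 1), B (2 ^ j)) + B d) :=
  dyadic_rank_decomposition_general A hsymm hfrob
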